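/- arXiv:2112.10856 — 2 statements merged into one kernel-verified Lean document; each statement's English description precedes it below -/
import Mathlib

section
/- Let A_1,...,A_K be bounded closed-range operators satisfying R(A_k) ⊆ N(A_{k'}*) and R(A_k*) ⊆ N(A_{k'}) for all k ≠ k', and suppose ∑_{k=1}^K A_k is invertible. Then for each k_0, (∑_{k=1}^K A_k) A_{k_0}† equals the orthogonal projection onto N(∑_{k≠k_0} A_k*), and A_{k_0}† (∑_{k=1}^K A_k) equals the orthogonal projection onto N(∑_{k≠k_0} A_k). -/
/-!
Write `S = ∑ A_k`. For `k ≠ k₀` the orthogonality hypotheses give `A_k B_{k₀} = 0` and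
`B_{k₀} A_k = 0`, so `S B_{k₀} = A_{k₀} B_{k₀}` and `B_{k₀} S = B_{k₀} A_{k₀}`; by the Penrose
equations these are the orthogonal projections onto `R(A_{k₀})` and `R(A_{k₀}*)`. It remains to
identify these ranges with the kernels. With `S = A_{k₀} + R`, surjectivity of `S` and
`R(A_{k₀}) ⊆ N(R*)` force `N(R*) = R(A_{k₀})`; the second kernel is the same statement for the
adjoint family, `S*` being surjective as well.
-/

noncomputable section
open ContinuousLinearMap
open scoped InnerProductSpace

/-- `X` is the Moore–Penrose inverse of `A`: the four Penrose equations. -/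
def IsMPInv {H₁ H₂ : Type*} [NormedAddCommGroup H₁] [InnerProductSpace ℂ H₁] [CompleteSpace H₁]
    [NormedAddCommGroup H₂] [InnerProductSpace ℂ H₂] [CompleteSpace H₂]
    (A : H₁ →L[ℂ] H₂) (X : H₂ →L[ℂ] H₁) : Prop :=
  A ∘L X ∘L A = A ∧ X ∘L A ∘L X = X ∧
    adjoint (A ∘L X) = A ∘L X ∧ adjoint (X ∘L A) = X ∘L A

variable {H₁ H₂ : Type*} [NormedAddCommGroup H₁] [InnerProductSpace ℂ H₁] [CompleteSpace H₁]
    [NormedAddCommGroup H₂] [InnerProductSpace ℂ H₂] [CompleteSpace H₂]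

/-- `P` is the orthogonal projection `P_W`, stated pointwise so that `W` need not be closed. -/
def IsOrthogonalProjectionOnto {𝕜 E : Type*} [RCLike 𝕜] [NormedAddCommGroup E]
    [InnerProductSpace 𝕜 E] (P : E →L[𝕜] E) (W : Submodule 𝕜 E) : Prop :=
  (∀ x ∈ W, P x = x) ∧ ∀ x ∈ Wᗮ, P x = 0

section Kernel

variable {𝕜 E F : Type*} [RCLike 𝕜] [NormedAddCommGroup E] [InnerProductSpace 𝕜 E]
  [CompleteSpace E] [NormedAddCommGroup F] [InnerProductSpace 𝕜 F] [CompleteSpace F]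

/-- If `x = P y + R y` lies in `ker R†`, then so does `R y = x - P y`, while
`ker R† = (range R)ᗮ`. -/
theorem ker_adjoint_eq_range_of_surjective_add {P R : E →L[𝕜] F}
    (hsurj : Function.Surjective (P + R))
    (horth : LinearMap.range (P : E →ₗ[𝕜] F) ≤ LinearMap.ker (adjoint R : F →ₗ[𝕜] E)) :
    LinearMap.ker (adjoint R : F →ₗ[𝕜] E) = LinearMap.range (P : E →ₗ[𝕜] F) := by
  refine le_antisymm (fun x hx => ?_) horth
  obtain ⟨y, rfl⟩ := hsurj x
  have hRy : R y ∈ LinearMap.range (R : E →ₗ[𝕜] F) ⊓ (LinearMap.range (R : E →ₗ[𝕜] F))ᗮ := by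
    refine ⟨⟨y, rfl⟩, ?_⟩
    rw [orthogonal_range]
    simpa using sub_mem hx (horth ⟨y, rfl⟩)
  rw [Submodule.inf_orthogonal_eq_bot, Submodule.mem_bot] at hRy
  exact ⟨y, by simp [hRy]⟩

theorem adjoint_finsetSum {ι : Type*} (s : Finset ι) (A : ι → E →L[𝕜] F) :
    adjoint (∑ k ∈ s, A k) = ∑ k ∈ s, adjoint (A k) :=
  map_sum (adjoint : (E →L[𝕜] F) ≃ₗᵢ⋆[𝕜] (F →L[𝕜] E)) A s

theorem ker_sum_adjoint_erase_eq_range {ι : Type*} [Fintype ι] [DecidableEq ι]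
    (A : ι → E →L[𝕜] F) (hsurj : Function.Surjective ⇑(∑ k, A k))
    (horth : ∀ k k', k ≠ k' →
      LinearMap.range (A k : E →ₗ[𝕜] F) ≤ LinearMap.ker (adjoint (A k') : F →ₗ[𝕜] E))
    (k₀ : ι) :
    LinearMap.ker ((∑ k ∈ Finset.univ.erase k₀, adjoint (A k) : F →L[𝕜] E) : F →ₗ[𝕜] E) =
      LinearMap.range (A k₀ : E →ₗ[𝕜] F) := by
  rw [← adjoint_finsetSum]
  refine ker_adjoint_eq_range_of_surjective_add ?_ ?_
  · rwa [Finset.add_sum_erase _ _ (Finset.mem_univ k₀)]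
  · rintro _ ⟨y, rfl⟩
    rw [adjoint_finsetSum, LinearMap.mem_ker, ContinuousLinearMap.coe_coe, sum_apply]
    exact Finset.sum_eq_zero fun k hk => horth k₀ k (Finset.ne_of_mem_erase hk).symm ⟨y, rfl⟩

end Kernel

namespace IsMPInv

variable {A : H₁ →L[ℂ] H₂} {X : H₂ →L[ℂ] H₁}

protected theorem adjoint (h : IsMPInv A X) : IsMPInv (adjoint A) (adjoint X) := by
  obtain ⟨h₁, h₂, h₃, h₄⟩ := h
  refine ⟨?_, ?_, ?_, ?_⟩
  · rw [← adjoint_comp, ← adjoint_comp, comp_assoc, h₁]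
  · rw [← adjoint_comp, ← adjoint_comp, comp_assoc, h₂]
  · rw [← adjoint_comp, h₄, h₄]
  · rw [← adjoint_comp, h₃, h₃]

theorem comp_eq_zero_of_range_adjoint_le_ker {G : Type*} [NormedAddCommGroup G]
    [NormedSpace ℂ G] (h : IsMPInv A X) {A' : H₁ →L[ℂ] G}
    (horth : LinearMap.range (adjoint A : H₂ →ₗ[ℂ] H₁) ≤ LinearMap.ker (A' : H₁ →ₗ[ℂ] G)) :
    A' ∘L X = 0 := by
  have hA' : A' ∘L adjoint A = 0 := by ext y; exact horth ⟨y, rfl⟩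
  calc A' ∘L X = A' ∘L (X ∘L A) ∘L X := by rw [comp_assoc, h.2.1]
    _ = A' ∘L adjoint A ∘L adjoint X ∘L X := by rw [← h.2.2.2, adjoint_comp]; rfl
    _ = 0 := by rw [← comp_assoc, hA', zero_comp]

theorem comp_eq_zero_of_range_le_ker_adjoint {G : Type*} [NormedAddCommGroup G]
    [NormedSpace ℂ G] (h : IsMPInv A X) {A' : G →L[ℂ] H₂}
    (horth : LinearMap.range (A' : G →ₗ[ℂ] H₂) ≤ LinearMap.ker (adjoint A : H₂ →ₗ[ℂ] H₁)) :
    X ∘L A' = 0 := by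
  have hA' : adjoint A ∘L A' = 0 := by ext y; exact horth ⟨y, rfl⟩
  calc X ∘L A' = X ∘L (A ∘L X) ∘L A' := by rw [← comp_assoc X (A ∘L X), h.2.1]
    _ = X ∘L adjoint X ∘L adjoint A ∘L A' := by rw [← h.2.2.1, adjoint_comp]; rfl
    _ = 0 := by rw [hA', comp_zero, comp_zero]

theorem isOrthogonalProjectionOnto_range (h : IsMPInv A X) :
    IsOrthogonalProjectionOnto (A ∘L X) (LinearMap.range (A : H₁ →ₗ[ℂ] H₂)) := by
  refine ⟨?_, fun x hx => ?_⟩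
  · rintro _ ⟨y, rfl⟩
    exact DFunLike.congr_fun h.1 y
  · rw [orthogonal_range, LinearMap.mem_ker, coe_coe] at hx
    rw [← h.2.2.1, adjoint_comp, comp_apply, hx, map_zero]

theorem isOrthogonalProjectionOnto_range_adjoint (h : IsMPInv A X) :
    IsOrthogonalProjectionOnto (X ∘L A) (LinearMap.range (adjoint A : H₂ →ₗ[ℂ] H₁)) := by
  have := h.adjoint.isOrthogonalProjectionOnto_range
  rwa [← adjoint_comp, h.2.2.2] at this

end IsMPInv

theorem stmt8_general {K : ℕ} (A : Fin K → (H₁ →L[ℂ] H₂)) (B : Fin K → (H₂ →L[ℂ] H₁))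
    (T : H₂ →L[ℂ] H₁)
    (horth1 : ∀ k k', k ≠ k' → LinearMap.range (A k : H₁ →ₗ[ℂ] H₂) ≤ LinearMap.ker (adjoint (A k') : H₂ →ₗ[ℂ] H₁))
    (horth2 : ∀ k k', k ≠ k' → LinearMap.range (adjoint (A k) : H₂ →ₗ[ℂ] H₁) ≤ LinearMap.ker (A k' : H₁ →ₗ[ℂ] H₂))
    (hMP : ∀ k, IsMPInv (A k) (B k))
    (hT1 : (∑ k, A k) ∘L T = ContinuousLinearMap.id ℂ H₂)
    (hT2 : T ∘L (∑ k, A k) = ContinuousLinearMap.id ℂ H₁) :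
    ∀ k₀ : Fin K,
      ((∀ x ∈ LinearMap.ker ((∑ k ∈ Finset.univ.erase k₀, adjoint (A k) : H₂ →L[ℂ] H₁) : H₂ →ₗ[ℂ] H₁),
          ((∑ k, A k) ∘L B k₀) x = x) ∧
        (∀ x ∈ (LinearMap.ker ((∑ k ∈ Finset.univ.erase k₀, adjoint (A k) : H₂ →L[ℂ] H₁) : H₂ →ₗ[ℂ] H₁) : Submodule ℂ H₂)ᗮ,
          ((∑ k, A k) ∘L B k₀) x = 0)) ∧
      ((∀ x ∈ LinearMap.ker ((∑ k ∈ Finset.univ.erase k₀, A k : H₁ →L[ℂ] H₂) : H₁ →ₗ[ℂ] H₂),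
          (B k₀ ∘L (∑ k, A k)) x = x) ∧
        (∀ x ∈ (LinearMap.ker ((∑ k ∈ Finset.univ.erase k₀, A k : H₁ →L[ℂ] H₂) : H₁ →ₗ[ℂ] H₂) : Submodule ℂ H₁)ᗮ,
          (B k₀ ∘L (∑ k, A k)) x = 0)) := by
  intro k₀
  have hsurj : Function.Surjective ⇑(∑ k, A k) := fun y => ⟨T y, DFunLike.congr_fun hT1 y⟩
  have hsurj' : Function.Surjective ⇑(∑ k, adjoint (A k)) := fun x =>
    ⟨adjoint T x, by
      rw [← adjoint_finsetSum, ← comp_apply, ← adjoint_comp, hT2, adjoint_id, id_apply]⟩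
  have hker :
      LinearMap.ker ((∑ k ∈ Finset.univ.erase k₀, adjoint (A k) : H₂ →L[ℂ] H₁) : H₂ →ₗ[ℂ] H₁) =
        LinearMap.range (A k₀ : H₁ →ₗ[ℂ] H₂) :=
    ker_sum_adjoint_erase_eq_range A hsurj horth1 k₀
  have hker' :
      LinearMap.ker ((∑ k ∈ Finset.univ.erase k₀, A k : H₁ →L[ℂ] H₂) : H₁ →ₗ[ℂ] H₂) =
        LinearMap.range (adjoint (A k₀) : H₂ →ₗ[ℂ] H₁) := by
    simpa only [adjoint_adjoint] using ker_sum_adjoint_erase_eq_range (fun k => adjoint (A k))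
      hsurj' (fun k k' hk => by simpa only [adjoint_adjoint] using horth2 k k' hk) k₀
  have hSB : (∑ k, A k) ∘L B k₀ = A k₀ ∘L B k₀ := by
    rw [finsetSum_comp, Finset.sum_eq_single k₀ (fun k _ hk =>
      (hMP k₀).comp_eq_zero_of_range_adjoint_le_ker (horth2 k₀ k (Ne.symm hk))) (by simp)]
  have hBS : B k₀ ∘L (∑ k, A k) = B k₀ ∘L A k₀ := by
    rw [comp_finsetSum, Finset.sum_eq_single k₀ (fun k _ hk =>
      (hMP k₀).comp_eq_zero_of_range_le_ker_adjoint (horth1 k k₀ hk)) (by simp)]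
  rw [hSB, hBS, hker, hker']
  exact ⟨(hMP k₀).isOrthogonalProjectionOnto_range,
    (hMP k₀).isOrthogonalProjectionOnto_range_adjoint⟩

theorem stmt8 {K : ℕ} (A : Fin K → (H₁ →L[ℂ] H₂)) (B : Fin K → (H₂ →L[ℂ] H₁))
    (T : H₂ →L[ℂ] H₁)
    (hclosed : ∀ k, IsClosed (LinearMap.range (A k : H₁ →ₗ[ℂ] H₂) : Set H₂))
    (horth1 : ∀ k k', k ≠ k' → LinearMap.range (A k : H₁ →ₗ[ℂ] H₂) ≤ LinearMap.ker (adjoint (A k') : H₂ →ₗ[ℂ] H₁))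
    (horth2 : ∀ k k', k ≠ k' → LinearMap.range (adjoint (A k) : H₂ →ₗ[ℂ] H₁) ≤ LinearMap.ker (A k' : H₁ →ₗ[ℂ] H₂))
    (hMP : ∀ k, IsMPInv (A k) (B k))
    (hT1 : (∑ k, A k) ∘L T = ContinuousLinearMap.id ℂ H₂)
    (hT2 : T ∘L (∑ k, A k) = ContinuousLinearMap.id ℂ H₁) :
    ∀ k₀ : Fin K,
      ((∀ x ∈ LinearMap.ker ((∑ k ∈ Finset.univ.erase k₀, adjoint (A k) : H₂ →L[ℂ] H₁) : H₂ →ₗ[ℂ] H₁),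
          ((∑ k, A k) ∘L B k₀) x = x) ∧
        (∀ x ∈ (LinearMap.ker ((∑ k ∈ Finset.univ.erase k₀, adjoint (A k) : H₂ →L[ℂ] H₁) : H₂ →ₗ[ℂ] H₁) : Submodule ℂ H₂)ᗮ,
          ((∑ k, A k) ∘L B k₀) x = 0)) ∧
      ((∀ x ∈ LinearMap.ker ((∑ k ∈ Finset.univ.erase k₀, A k : H₁ →L[ℂ] H₂) : H₁ →ₗ[ℂ] H₂),
          (B k₀ ∘L (∑ k, A k)) x = x) ∧
        (∀ x ∈ (LinearMap.ker ((∑ k ∈ Finset.univ.erase k₀, A k : H₁ →L[ℂ] H₂) : H₁ →ₗ[ℂ] H₂) : Submodule ℂ H₁)ᗮ,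
          (B k₀ ∘L (∑ k, A k)) x = 0)) :=
  stmt8_general A B T horth1 horth2 hMP hT1 hT2
end
end

section
/- Let n ≥ 2, α ∈ ℂ \ {0}, and C = α(I − Π) where Π is the n×n cyclic shift circulant matrix circ(0,1,0,...,0). Then N(C) = span{(1,1,...,1)} and C† = (1/(2nα)) circ(n−1, n−3, n−5, ..., 2−n, 1−n). -/
noncomputable section
open Matrix

/-- The circulant matrix with first row `c`; each subsequent row is the
cyclic right shift of the previous one. -/
def circ {n : ℕ} {α : Type*} (c : Fin n → α) : Matrix (Fin n) (Fin n) α :=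
  Matrix.of fun i j => c (j - i)

/-- `X` is the Moore–Penrose inverse of the complex matrix `A`. -/
def IsMP {m n : ℕ} (A : Matrix (Fin m) (Fin n) ℂ) (X : Matrix (Fin n) (Fin m) ℂ) : Prop :=
  A * X * A = A ∧ X * A * X = X ∧ (A * X)ᴴ = A * X ∧ (X * A)ᴴ = X * A

/-!
Write `Π` for the permutation matrix of `i ↦ i + 1`; scaling `C` by `α` scales `C†` by `α⁻¹`, so
take `α = 1`. Multiplying `circ c` by `I - Π` on either side gives `circ (c - c (· - 1))`, and for
`c j = n - 1 - 2j` this difference is `2n δ₀ - 2`. Hence `X = circ c / 2n` satisfies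
`(I - Π) X = X (I - Π) = I - J / n`, with `J` the all-ones matrix: the orthogonal projector onto
`1^⊥`. As `J` kills `I - Π` (its columns sum to zero) and `circ c` (`∑ c = 0`), the four Penrose
equations follow. The kernel: `(I - Π) v = v - v (· + 1)` vanishes exactly for constant `v`.
-/

section Circulant

variable {R : Type*} {n : ℕ}

@[simp]
lemma circ_apply (c : Fin n → R) (i j : Fin n) : circ c i j = c (j - i) := rfl

lemma circ_sub [Sub R] (a b : Fin n → R) : circ (a - b) = circ a - circ b := rfl

lemma circ_smul {S : Type*} [SMul S R] (s : S) (c : Fin n → R) : circ (s • c) = s • circ c := rfl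

variable [NeZero n]

lemma circ_mul_circ_one [NonAssocSemiring R] (c : Fin n → R) :
    circ c * circ 1 = (∑ d, c d) • circ 1 := by
  ext i k
  simp only [mul_apply, circ_apply, Pi.one_apply, mul_one, Matrix.smul_apply, smul_eq_mul]
  exact (Equiv.subRight i).sum_comp c

lemma circ_single_zero [Zero R] [One R] : circ (Pi.single 0 1 : Fin n → R) = 1 := by
  ext i j
  simp [one_apply, Pi.single_apply, sub_eq_zero, eq_comm]

variable (R n) in
abbrev cyclicShift [Zero R] [One R] : Matrix (Fin n) (Fin n) R :=
  (Equiv.addRight 1).permMatrix R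

lemma circ_ite_val_eq_one [Zero R] [One R] (hn : 2 ≤ n) :
    circ (fun j : Fin n => if (j : ℕ) = 1 then (1 : R) else 0) = cyclicShift R n := by
  have : ((1 : Fin n) : ℕ) = 1 := Fin.val_one' n ▸ Nat.mod_eq_of_lt hn
  ext i j
  simp only [circ_apply, ← this, Fin.val_inj, sub_eq_iff_eq_add, add_comm 1 i]
  simp [PEquiv.toMatrix_apply, eq_comm]

lemma cyclicShift_mul_circ [NonAssocSemiring R] (c : Fin n → R) :
    cyclicShift R n * circ c = circ fun d => c (d - 1) := by
  ext i k
  simp [PEquiv.toMatrix_toPEquiv_mul, sub_add_eq_sub_sub]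

lemma circ_mul_cyclicShift [NonAssocSemiring R] (c : Fin n → R) :
    circ c * cyclicShift R n = circ fun d => c (d - 1) := by
  ext i k
  simp [PEquiv.mul_toMatrix_toPEquiv, ← sub_eq_add_neg, sub_right_comm]

lemma cyclicShift_mulVec [NonAssocSemiring R] (v : Fin n → R) :
    cyclicShift R n *ᵥ v = fun i => v (i + 1) :=
  PEquiv.toMatrix_toPEquiv_mulVec _ v

open Fin.NatCast in
lemma ker_one_sub_cyclicShift [CommRing R] :
    LinearMap.ker (1 - cyclicShift R n).mulVecLin = Submodule.span R {fun _ => 1} := by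
  ext v
  rw [LinearMap.mem_ker, mulVecLin_apply, sub_mulVec, one_mulVec, cyclicShift_mulVec, sub_eq_zero,
    Submodule.mem_span_singleton]
  constructor
  · intro hv
    have hconst : ∀ k : ℕ, v (k : Fin n) = v 0 := by
      intro k
      induction k with
      | zero => simp
      | succ k ih => rw [Nat.cast_succ, ← congrFun hv, ih]
    exact ⟨v 0, funext fun i => by simpa using (hconst i).symm⟩
  · rintro ⟨a, rfl⟩
    rfl

end Circulant

section PinvRow

variable {R : Type*} {n : ℕ}

variable (R n) in
/-- The first row `n - 1, n - 3, …, 1 - n` of `2 n α C†`. -/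
def pinvRow [Ring R] : Fin n → R := fun j => (n : R) - 1 - 2 * (j : ℕ)

variable [CommRing R]

lemma sum_pinvRow : ∑ j, pinvRow R n j = 0 := by
  have hgauss : ((∑ i ∈ Finset.range n, i : ℕ) : R) * 2 = n * (n - 1) := by
    rw [← Nat.cast_ofNat, ← Nat.cast_mul, Finset.sum_range_id_mul_two]
    rcases n with _ | n <;> simp
  simp only [pinvRow, Fin.sum_univ_eq_sum_range (fun i => (n : R) - 1 - 2 * i),
    Finset.sum_sub_distrib, ← Finset.mul_sum, Finset.sum_const, Finset.card_range, nsmul_eq_mul]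
  push_cast at hgauss
  linear_combination -hgauss

variable [NeZero n]

lemma pinvRow_sub_pinvRow_sub_one (d : Fin n) :
    pinvRow R n d - pinvRow R n (d - 1) = 2 * n * (Pi.single 0 1 : Fin n → R) d - 2 := by
  rcases eq_or_ne d 0 with rfl | hd
  · obtain ⟨m, rfl⟩ := Nat.exists_eq_succ_of_ne_zero (NeZero.ne n)
    simp only [pinvRow, zero_sub, Fin.coe_neg_one, Fin.val_zero, Pi.single_eq_same]
    push_cast
    ring
  · have hd1 : 1 ≤ (d : ℕ) := Nat.one_le_iff_ne_zero.2 (Fin.val_ne_zero_iff.2 hd)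
    simp only [pinvRow, Fin.val_sub_one_of_ne_zero hd, Nat.cast_sub hd1, Pi.single_eq_of_ne hd]
    push_cast
    ring

lemma one_sub_cyclicShift_mul_circ_pinvRow :
    (1 - cyclicShift R n) * circ (pinvRow R n) = (2 * n : R) • 1 - (2 : R) • circ 1 := by
  have hdiff : (pinvRow R n - fun d => pinvRow R n (d - 1)) =
      (2 * n : R) • Pi.single 0 1 - (2 : R) • 1 := by
    funext d
    simpa using pinvRow_sub_pinvRow_sub_one d
  rw [sub_mul, one_mul, cyclicShift_mul_circ, ← circ_sub, hdiff, circ_sub, circ_smul, circ_smul,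
    circ_single_zero]

lemma commute_circ_cyclicShift (c : Fin n → R) : Commute (circ c) (cyclicShift R n) :=
  (circ_mul_cyclicShift c).trans (cyclicShift_mul_circ c).symm

end PinvRow

section MoorePenrose

variable {n : ℕ}

lemma mulVecLin_smul {R : Type*} [CommRing R] {m : ℕ} (a : R) (M : Matrix (Fin m) (Fin n) R) :
    (a • M).mulVecLin = a • M.mulVecLin :=
  LinearMap.ext fun v => smul_mulVec a M v

lemma IsMP.smul {m : ℕ} {A : Matrix (Fin m) (Fin n) ℂ} {X : Matrix (Fin n) (Fin m) ℂ} (h : IsMP A X)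
    {a : ℂ} (ha : a ≠ 0) : IsMP (a • A) (a⁻¹ • X) := by
  obtain ⟨h₁, h₂, h₃, h₄⟩ := h
  have hAX : a • A * a⁻¹ • X = A * X := by
    rw [Matrix.smul_mul, Matrix.mul_smul, smul_smul, mul_inv_cancel₀ ha, one_smul]
  have hXA : a⁻¹ • X * a • A = X * A := by
    rw [Matrix.smul_mul, Matrix.mul_smul, smul_smul, inv_mul_cancel₀ ha, one_smul]
  refine ⟨?_, ?_, hAX ▸ h₃, hXA ▸ h₄⟩
  · rw [hAX, Matrix.mul_smul, h₁]
  · rw [hXA, Matrix.mul_smul, h₂]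

lemma isMP_one_sub_cyclicShift [NeZero n] :
    IsMP (1 - cyclicShift ℂ n) ((2 * n : ℂ)⁻¹ • circ (pinvRow ℂ n)) := by
  set A := 1 - cyclicShift ℂ n
  set X := (2 * n : ℂ)⁻¹ • circ (pinvRow ℂ n)
  set Q : Matrix (Fin n) (Fin n) ℂ := 1 - (n : ℂ)⁻¹ • circ 1
  have hn : (n : ℂ) ≠ 0 := Nat.cast_ne_zero.2 (NeZero.ne n)
  have hAX : A * X = Q := by
    rw [mul_smul_comm, one_sub_cyclicShift_mul_circ_pinvRow, smul_sub, smul_smul, smul_smul,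
      inv_mul_cancel₀ (by simpa using hn), one_smul]
    congr 2
    field_simp
  have hXA : X * A = A * X :=
    (((Commute.one_right _).sub_right (commute_circ_cyclicShift _)).smul_left _).eq
  have hQA : Q * A = A := by
    rw [sub_mul, one_mul, sub_eq_self, smul_mul_assoc, mul_sub, mul_one,
      show circ 1 * cyclicShift ℂ n = circ 1 from circ_mul_cyclicShift 1, sub_self, smul_zero]
  have hXQ : X * Q = X := by
    rw [mul_sub, mul_one, sub_eq_self, mul_smul_comm, smul_mul_assoc, circ_mul_circ_one,
      sum_pinvRow, zero_smul, smul_zero, smul_zero]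
  have hQ : Qᴴ = Q := by
    ext i j
    simp [Q, one_apply, eq_comm]
  exact ⟨by rw [hAX, hQA], by rw [mul_assoc, hAX, hXQ], hAX ▸ hQ, hXA ▸ hAX ▸ hQ⟩

end MoorePenrose

theorem stmt16 {n : ℕ} (hn : 2 ≤ n) (α : ℂ) (hα : α ≠ 0)
    (C : Matrix (Fin n) (Fin n) ℂ)
    (hC : C = α • ((1 : Matrix (Fin n) (Fin n) ℂ) -
      circ (fun j => if (j : ℕ) = 1 then (1 : ℂ) else 0))) :
    LinearMap.ker C.mulVecLin = Submodule.span ℂ {fun _ => (1 : ℂ)} ∧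
    IsMP C ((1/(2*(n : ℂ)*α)) • circ (fun j => (n : ℂ) - 1 - 2*((j : ℕ) : ℂ))) := by
  have : NeZero n := ⟨by omega⟩
  rw [circ_ite_val_eq_one hn] at hC
  subst hC
  have hX : (1/(2*(n : ℂ)*α)) • circ (pinvRow ℂ n) =
      α⁻¹ • ((2 * n : ℂ)⁻¹ • circ (pinvRow ℂ n)) := by
    rw [smul_smul, one_div, mul_inv, mul_comm]
  refine ⟨?_, hX ▸ isMP_one_sub_cyclicShift.smul hα⟩
  rw [mulVecLin_smul, LinearMap.ker_smul _ _ hα, ker_one_sub_cyclicShift]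
end
end
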